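/- arXiv:1805.10452 — 2 statements merged into one kernel-verified Lean document; each statement's English description precedes it below -/
import Mathlib

section
/- Let F be a finite field of characteristic p and order q, and let d be an invertible exponent over F. Then there exists some a ∈ F such that |W_{F,d}(a)| > √q. -/
open scoped BigOperators

/-- The canonical additive character of a finite field `F` of characteristic `p`:
`ψ(x) = exp(2πi·Tr(x)/p)`, where `Tr` is the absolute trace from `F` to `𝔽_p = ZMod p`. -/
noncomputable def canonicalPsi (F : Type*) [Field F] [Fintype F] (p : ℕ) [CharP F p]
    (x : F) : ℂ :=
  letI : Algebra (ZMod p) F := ZMod.algebra F p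
  Complex.exp (2 * Real.pi * Complex.I * ((Algebra.trace (ZMod p) F x).val : ℂ) / (p : ℂ))

/-- The Weil sum `W_{F,d}(a) = ∑_{x ∈ F} ψ(x^d − a·x)`. -/
noncomputable def weilSum (F : Type*) [Field F] [Fintype F] (p : ℕ) [CharP F p]
    (d : ℕ) (a : F) : ℂ :=
  ∑ x : F, canonicalPsi F p (x ^ d - a * x)

/-! Parseval's identity for the additive Fourier transform gives `∑ₐ |W(a)|² = q²`. Since
`x ↦ x ^ d` permutes `F`, `W(0) = ∑ₓ ψ(x) = 0`, so the `q - 1` remaining values of `|W(a)|²`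
average `q² / (q - 1) > q`. -/

open Finset

namespace AddChar

variable {R : Type*} [CommRing R] [Fintype R]

theorem sum_norm_sq_sum_mul_apply_mul [DecidableEq R] {ψ : AddChar R ℂ} (hψ : ψ.IsPrimitive)
    (g : R → ℂ) :
    ∑ a, ‖∑ x, g x * ψ (a * x)‖ ^ 2 = Fintype.card R * ∑ x, ‖g x‖ ^ 2 := by
  have expand (a : R) : ((‖∑ x, g x * ψ (a * x)‖ ^ 2 : ℝ) : ℂ) =
      ∑ x, ∑ y, g x * starRingEnd ℂ (g y) * ψ (a * (x - y)) := by
    rw [Complex.ofReal_pow, ← Complex.mul_conj', map_sum, sum_mul_sum]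
    refine sum_congr rfl fun x _ => sum_congr rfl fun y _ => ?_
    rw [map_mul (starRingEnd ℂ), ← map_neg_eq_conj, mul_sub, sub_eq_add_neg, map_add_eq_mul,
      ← mul_neg]
    ring
  have orth (x y : R) : ∑ a, ψ (a * (x - y)) = if x = y then (Fintype.card R : ℂ) else 0 := by
    rw [sum_mulShift _ hψ]
    push_cast [sub_eq_zero]
    rfl
  apply Complex.ofReal_injective
  calc ((∑ a, ‖∑ x, g x * ψ (a * x)‖ ^ 2 : ℝ) : ℂ)
      = ∑ x, ∑ y, g x * starRingEnd ℂ (g y) * ∑ a, ψ (a * (x - y)) := by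
        rw [Complex.ofReal_sum]
        simp_rw [expand, mul_sum]
        rw [sum_comm]
        exact sum_congr rfl fun x _ => sum_comm
    _ = Fintype.card R * ∑ x, ((‖g x‖ ^ 2 : ℝ) : ℂ) := by
        simp_rw [orth, mul_ite, mul_zero, sum_ite_eq, mem_univ, if_true, mul_sum,
          Complex.ofReal_pow, Complex.mul_conj', mul_comm]
    _ = _ := by push_cast; rfl

end AddChar

theorem FiniteField.pow_bijective_of_coprime {F : Type*} [Field F] [Fintype F] {d : ℕ}
    (hd : 0 < d) (hcop : d.Coprime (Fintype.card F - 1)) :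
    Function.Bijective fun x : F => x ^ d := by
  classical
  have hunits : Function.Bijective fun u : Fˣ => u ^ d := by
    apply Nat.Coprime.pow_left_bijective
    rwa [Nat.card_eq_fintype_card, Fintype.card_units, Nat.coprime_comm]
  refine Finite.injective_iff_bijective.mp fun x y hxy => ?_
  rcases eq_or_ne x 0 with rfl | hx
  · rwa [zero_pow hd.ne', eq_comm, pow_eq_zero_iff hd.ne', eq_comm] at hxy
  rcases eq_or_ne y 0 with rfl | hy
  · rwa [zero_pow hd.ne', pow_eq_zero_iff hd.ne'] at hxy
  simpa using
    congrArg Units.val (hunits.injective (a₁ := .mk0 x hx) (a₂ := .mk0 y hy) (Units.ext hxy))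

section CanonicalAddChar

variable (F : Type*) [Field F] [Fintype F] (p : ℕ) [Fact p.Prime] [CharP F p]

noncomputable def canonicalAddChar : AddChar F ℂ :=
  letI : Algebra (ZMod p) F := ZMod.algebra F p
  ZMod.stdAddChar.compAddMonoidHom (Algebra.trace (ZMod p) F).toAddMonoidHom

theorem canonicalAddChar_apply (x : F) : canonicalAddChar F p x = canonicalPsi F p x := by
  simp [canonicalAddChar, canonicalPsi, ZMod.stdAddChar_apply, ZMod.toCircle_apply]

theorem canonicalAddChar_ne_one : canonicalAddChar F p ≠ 1 := by
  let : Algebra (ZMod p) F := ZMod.algebra F p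
  obtain ⟨x, hx⟩ := Algebra.trace_surjective (ZMod p) F 1
  refine AddChar.ne_one_iff.2 ⟨x, ?_⟩
  have hψx : canonicalAddChar F p x = ZMod.stdAddChar (1 : ZMod p) := by rw [← hx]; rfl
  rw [hψx, ← (ZMod.stdAddChar (N := p)).map_zero_eq_one, ZMod.injective_stdAddChar.ne_iff]
  exact one_ne_zero

end CanonicalAddChar

theorem exists_lt_of_sum_eq_card_mul_of_apply_eq_zero {ι : Type*} [Fintype ι] {f : ι → ℝ}
    {c : ℝ} (hc : 0 < c) {i₀ : ι} (hi₀ : f i₀ = 0) (hsum : ∑ i, f i = Fintype.card ι * c) :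
    ∃ i, c < f i := by
  classical
  by_contra! hle
  have : Nonempty ι := ⟨i₀⟩
  have hrest := sum_le_card_nsmul (univ.erase i₀) f c fun i _ => hle i
  rw [card_erase_of_mem (mem_univ i₀), card_univ, nsmul_eq_mul,
    Nat.cast_pred Fintype.card_pos, sum_erase_eq_sub (mem_univ i₀), hi₀, sub_zero, hsum] at hrest
  linarith

section WeilSum

variable (F : Type*) [Field F] [Fintype F] (p : ℕ) [Fact p.Prime] [CharP F p] (d : ℕ)

theorem weilSum_eq_sum_mul (a : F) :
    weilSum F p d a =
      ∑ x, canonicalAddChar F p (x ^ d) * canonicalAddChar F p (-a * x) := by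
  simp_rw [weilSum, ← canonicalAddChar_apply, ← AddChar.map_add_eq_mul, neg_mul, sub_eq_add_neg]

theorem sum_norm_sq_weilSum : ∑ a, ‖weilSum F p d a‖ ^ 2 = (Fintype.card F : ℝ) ^ 2 := by
  classical
  set ψ := canonicalAddChar F p
  calc ∑ a, ‖weilSum F p d a‖ ^ 2 = ∑ a, ‖∑ x, ψ (x ^ d) * ψ (a * x)‖ ^ 2 := by
        simp_rw [weilSum_eq_sum_mul]
        exact Fintype.sum_equiv (Equiv.neg F) _ _ fun a => rfl
    _ = Fintype.card F * ∑ x, ‖ψ (x ^ d)‖ ^ 2 :=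
        AddChar.sum_norm_sq_sum_mul_apply_mul (.of_ne_one (canonicalAddChar_ne_one F p)) _
    _ = (Fintype.card F : ℝ) ^ 2 := by simp [AddChar.norm_apply, sq]

variable {d}

theorem weilSum_zero (hd : 0 < d) (hcop : d.Coprime (Fintype.card F - 1)) :
    weilSum F p d 0 = 0 := by
  simp_rw [weilSum, zero_mul, sub_zero, ← canonicalAddChar_apply]
  rw [(FiniteField.pow_bijective_of_coprime hd hcop).sum_comp (canonicalAddChar F p)]
  exact AddChar.sum_eq_zero_of_ne_one (canonicalAddChar_ne_one F p)

end WeilSum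

/-- There is some `a ∈ F` such that `|W_{F,d}(a)| > √q`. -/
theorem exists_abs_weilSum_gt_sqrt_card (F : Type*) [Field F] [Fintype F]
    (p : ℕ) [Fact p.Prime] [CharP F p] (d : ℕ) (hd : 0 < d)
    (hgcd : Nat.gcd d (Fintype.card F - 1) = 1) :
    ∃ a : F, Real.sqrt (Fintype.card F) < ‖weilSum F p d a‖ := by
  obtain ⟨a, ha⟩ := exists_lt_of_sum_eq_card_mul_of_apply_eq_zero
    (f := fun a => ‖weilSum F p d a‖ ^ 2) (c := Fintype.card F) (i₀ := 0)
    (by exact_mod_cast Fintype.card_pos) (by simp [weilSum_zero F p hd hgcd])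
    (by rw [sum_norm_sq_weilSum, sq])
  exact ⟨a, (Real.sqrt_lt (Nat.cast_nonneg _) (norm_nonneg _)).2 ha⟩
end

section
/- Let F be a finite field of characteristic 2 and order q = 2^{2m} with m a positive integer, and let d be an invertible exponent over F. Then there exists some a ∈ F with a ≠ 0 such that W_{F,d}(a) > 2^m + 2^{⌊m/2⌋}. -/
open scoped BigOperators

/-!
Put `Q = 2 ^ m` and `K = {x | x ^ Q = x}`, the kernel of the additive map `x ↦ x ^ Q + x`.
Since `#F = Q²` this map sends `F` into `K`, and `K` has at most `Q` elements (roots of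
`X ^ Q - X`), so its kernel and image both equal `K` and `#K = Q`. The character `ψ = (-1) ^ Tr`
is Frobenius-invariant, so `ψ (x ^ Q + x) = ψ x ^ 2 = 1`: `ψ` is trivial on `K`, hence `K` lies
in its annihilator for `(u, c) ↦ ψ (u * c)`, and a count shows the two coincide. Orthogonality
over `K` gives `∑_{a ∈ K} W(a) = Q²` and `∑_{a ∈ K} W(a)² = Q² N`, where
`N = #{s | s ^ d + (s + 1) ^ d ∈ K} ≥ 2Q` since it counts every `s` with `s ^ Q + s ∈ {0, 1}`;
also `W(0) = 0`. If `W(a) ≤ Q + T` on `K \ {0}` with `T² ≤ Q`, the `Q - 1` numbers `W(a) - Q`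
sum to `Q` and have square sum at least `Q³ - Q²`, while splitting them into positive and
negative parts bounds that square sum by `Q³ - 2Q²`.
-/

open Finset

theorem FiniteField.trace_pow_card_pow {K L : Type*} [Field K] [Fintype K] [Field L]
    [Algebra K L] [Algebra.IsAlgebraic K L] (x : L) (n : ℕ) :
    Algebra.trace K L (x ^ Fintype.card K ^ n) = Algebra.trace K L x := by
  induction n with
  | zero => simp
  | succ n ih =>
    rw [pow_succ, pow_mul, ← ih]
    exact Algebra.trace_eq_of_algEquiv (FiniteField.frobeniusAlgEquivOfAlgebraic K L) _

noncomputable def traceChar (F : Type*) [Field F] [CharP F 2] : AddChar F ℝ :=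
  letI := ZMod.algebra F 2
  (AddChar.zmodChar 2 (show (-1 : ℝ) ^ 2 = 1 by norm_num)).compAddMonoidHom
    (Algebra.trace (ZMod 2) F).toAddMonoidHom

section traceChar

variable {F : Type*} [Field F] [CharP F 2]

theorem traceChar_apply (x : F) :
    traceChar F x = (-1) ^ (letI := ZMod.algebra F 2; Algebra.trace (ZMod 2) F x).val := rfl

theorem canonicalPsi_two_eq_traceChar [Fintype F] (x : F) :
    canonicalPsi F 2 x = traceChar F x := by
  rw [canonicalPsi, traceChar_apply]
  generalize (letI := ZMod.algebra F 2; Algebra.trace (ZMod 2) F x).val = n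
  rw [show 2 * (Real.pi : ℂ) * Complex.I * n / (2 : ℕ) = n * (Real.pi * Complex.I) by
    push_cast; ring, Complex.exp_nat_mul, Complex.exp_pi_mul_I]
  push_cast; rfl

theorem traceChar_pow_two_pow [Finite F] (x : F) (n : ℕ) :
    traceChar F (x ^ 2 ^ n) = traceChar F x := by
  let _ := ZMod.algebra F 2
  have := Fintype.ofFinite F
  have h := FiniteField.trace_pow_card_pow (K := ZMod 2) x n
  rw [ZMod.card] at h
  simp only [traceChar_apply, h]

theorem traceChar_ne_one [Finite F] : traceChar F ≠ 1 := by
  let _ := ZMod.algebra F 2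
  have := Fintype.ofFinite F
  obtain ⟨x, hx⟩ := Algebra.trace_surjective (ZMod 2) F 1
  refine AddChar.ne_one_iff.2 ⟨x, ?_⟩
  rw [traceChar_apply, hx, ZMod.val_one]
  norm_num

end traceChar

section fixedSubfield

variable (F : Type*) [Field F] [CharP F 2]

def fixedSubfield (m : ℕ) : Subfield F := (iterateFrobenius F 2 m).eqLocusField (RingHom.id F)

/-- The relative trace from `F` to `fixedSubfield F m` when `#F = 2 ^ (2 * m)`. -/
def relTrace (m : ℕ) : F →+ F := (iterateFrobenius F 2 m).toAddMonoidHom + AddMonoidHom.id F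

variable {F} {m : ℕ}

theorem mem_fixedSubfield {x : F} : x ∈ fixedSubfield F m ↔ x ^ 2 ^ m = x := Iff.rfl

theorem relTrace_apply (x : F) : relTrace F m x = x ^ 2 ^ m + x := rfl

theorem ker_relTrace : (relTrace F m).ker = (fixedSubfield F m).toAddSubgroup := by
  ext x
  rw [AddMonoidHom.mem_ker, relTrace_apply, Subfield.mem_toAddSubgroup, mem_fixedSubfield,
    add_eq_zero_iff_eq_neg, CharTwo.neg_eq]

theorem range_relTrace_le [Fintype F] (hcard : Fintype.card F = (2 ^ m) ^ 2) :
    (relTrace F m).range ≤ (fixedSubfield F m).toAddSubgroup := by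
  rintro _ ⟨x, rfl⟩
  rw [Subfield.mem_toAddSubgroup, mem_fixedSubfield, relTrace_apply, add_pow_char_pow, ← pow_mul,
    ← sq, ← hcard, FiniteField.pow_card, add_comm]

theorem card_fixedSubfield_le [Fintype F] (hm : 0 < m) :
    Nat.card (fixedSubfield F m) ≤ 2 ^ m := by
  classical
  have hQ : 1 < 2 ^ m := Nat.one_lt_two_pow hm.ne'
  have := Polynomial.card_le_degree_of_subset_roots (p := Polynomial.X ^ 2 ^ m - Polynomial.X)
    (Z := univ.filter (· ∈ fixedSubfield F m)) fun x hx ↦ by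
      rw [Polynomial.mem_roots (FiniteField.X_pow_card_sub_X_ne_zero F hQ)]
      simpa [sub_eq_zero, mem_fixedSubfield] using hx
  rwa [FiniteField.X_pow_card_sub_X_natDegree_eq F hQ, ← Fintype.card_subtype,
    ← Nat.card_eq_fintype_card] at this

theorem card_fixedSubfield_mul_card_range [Fintype F] :
    Nat.card (fixedSubfield F m) * Nat.card (relTrace F m).range = Fintype.card F := by
  rw [← Nat.card_eq_fintype_card (α := F), ← AddSubgroup.index_ker (relTrace F m),
    ker_relTrace]
  exact (fixedSubfield F m).toAddSubgroup.card_mul_index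

theorem card_fixedSubfield [Fintype F] (hm : 0 < m) (hcard : Fintype.card F = (2 ^ m) ^ 2) :
    Nat.card (fixedSubfield F m) = 2 ^ m := by
  have hle := card_fixedSubfield_le (F := F) hm
  have hrange : Nat.card (relTrace F m).range ≤ Nat.card (fixedSubfield F m) :=
    AddSubgroup.card_le_of_le (range_relTrace_le hcard)
  have hprod := card_fixedSubfield_mul_card_range (F := F) (m := m)
  nlinarith

theorem range_relTrace [Fintype F] (hm : 0 < m) (hcard : Fintype.card F = (2 ^ m) ^ 2) :
    (relTrace F m).range = (fixedSubfield F m).toAddSubgroup := by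
  refine AddSubgroup.eq_of_le_of_card_ge (range_relTrace_le hcard) ?_
  have hprod := card_fixedSubfield_mul_card_range (F := F) (m := m)
  change Nat.card (fixedSubfield F m) ≤ _
  rw [card_fixedSubfield hm hcard, hcard] at *
  nlinarith

end fixedSubfield

open scoped Classical in
theorem AddChar.sum_addSubgroup_mul {A R : Type*} [Ring A] [CommRing R] [IsDomain R]
    (ψ : AddChar A R) (H : AddSubgroup A) [Fintype H] (c : A) :
    ∑ u : H, ψ (u * c) = if ∀ u ∈ H, ψ (u * c) = 1 then (Nat.card H : R) else 0 := by
  let χ : AddChar H R := ψ.compAddMonoidHom ((AddMonoidHom.mulRight c).comp H.subtype)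
  have hχ : χ = 0 ↔ ∀ u ∈ H, ψ (u * c) = 1 := by
    simp [χ, AddChar.eq_zero_iff]
  rw [show ∑ u : H, ψ (u * c) = ∑ u, χ u from rfl, AddChar.sum_eq_ite,
    Nat.card_eq_fintype_card]
  exact if_congr hχ rfl rfl

open scoped Classical in
theorem AddChar.card_annihilator_mul_card {F R : Type*} [Field F] [Fintype F]
    [CommRing R] [IsDomain R] [CharZero R] {ψ : AddChar F R} (hψ : ψ ≠ 1)
    (H : AddSubgroup F) [Fintype H] :
    #{c | ∀ u ∈ H, ψ (u * c) = 1} * Nat.card H = Fintype.card F := by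
  apply Nat.cast_injective (R := R)
  calc ((#{c | ∀ u ∈ H, ψ (u * c) = 1} * Nat.card H : ℕ) : R)
      = ∑ c, ∑ u : H, ψ (u * c) := by
        simp_rw [AddChar.sum_addSubgroup_mul]
        simp [Finset.sum_ite]
    _ = ∑ u : H, ∑ c, ψ (u * c) := Finset.sum_comm
    _ = Fintype.card F := by
        simp_rw [mul_comm (_ : F), AddChar.sum_mulShift _ (AddChar.IsPrimitive.of_ne_one hψ)]
        simp [apply_ite (Nat.cast : ℕ → R)]

section fixedSubfieldChar

open scoped Classical

variable {F : Type*} [Field F] [Fintype F] [CharP F 2] {m : ℕ}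

theorem traceChar_relTrace (x : F) : traceChar F (relTrace F m x) = 1 := by
  rw [relTrace_apply, AddChar.map_add_eq_mul, traceChar_pow_two_pow, ← AddChar.map_add_eq_mul,
    CharTwo.add_self_eq_zero, AddChar.map_zero_eq_one]

theorem traceChar_eq_one_of_mem_fixedSubfield (hm : 0 < m)
    (hcard : Fintype.card F = (2 ^ m) ^ 2) {k : F} (hk : k ∈ fixedSubfield F m) :
    traceChar F k = 1 := by
  obtain ⟨x, rfl⟩ : k ∈ (relTrace F m).range := by rwa [range_relTrace hm hcard]
  exact traceChar_relTrace x

theorem card_filter_mem_fixedSubfield (hm : 0 < m) (hcard : Fintype.card F = (2 ^ m) ^ 2) :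
    #{x | x ∈ fixedSubfield F m} = 2 ^ m := by
  rw [← Fintype.card_subtype, ← Nat.card_eq_fintype_card, card_fixedSubfield hm hcard]

theorem forall_traceChar_mul_eq_one_iff (hm : 0 < m) (hcard : Fintype.card F = (2 ^ m) ^ 2)
    (c : F) :
    (∀ u ∈ fixedSubfield F m, traceChar F (u * c) = 1) ↔ c ∈ fixedSubfield F m := by
  set K := fixedSubfield F m
  -- `K` lies in its annihilator, which has `#F / #K = #K` elements.
  have hsub : ({c | c ∈ K} : Finset F) ⊆
      ({c | ∀ u ∈ K.toAddSubgroup, traceChar F (u * c) = 1} : Finset F) := by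
    intro c hc
    simp only [mem_filter, mem_univ, true_and, Subfield.mem_toAddSubgroup] at hc ⊢
    exact fun u hu ↦ traceChar_eq_one_of_mem_fixedSubfield hm hcard (K.mul_mem hu hc)
  have hK : #({c | c ∈ K} : Finset F) = 2 ^ m := card_filter_mem_fixedSubfield hm hcard
  have hann := AddChar.card_annihilator_mul_card (traceChar_ne_one (F := F)) K.toAddSubgroup
  change _ * Nat.card K = _ at hann
  rw [card_fixedSubfield hm hcard, hcard, sq] at hann
  have heq := eq_of_subset_of_card_le hsub
    (by rw [hK, Nat.eq_of_mul_eq_mul_right (by positivity) hann])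
  simpa using (Finset.ext_iff.mp heq c).symm

theorem sum_fixedSubfield_traceChar_mul (hm : 0 < m) (hcard : Fintype.card F = (2 ^ m) ^ 2)
    (c : F) :
    ∑ u : fixedSubfield F m, traceChar F (u * c) =
      if c ∈ fixedSubfield F m then 2 ^ m else 0 := by
  refine (AddChar.sum_addSubgroup_mul (traceChar F) (fixedSubfield F m).toAddSubgroup c).trans ?_
  simp only [Subfield.mem_toAddSubgroup, forall_traceChar_mul_eq_one_iff hm hcard c]
  rw [card_fixedSubfield hm hcard, Nat.cast_pow, Nat.cast_ofNat]

end fixedSubfieldChar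

theorem pow_injective_of_coprime {K : Type*} [Field K] [Fintype K] {d : ℕ} (hd : d ≠ 0)
    (hcop : d.Coprime (Fintype.card K - 1)) : Function.Injective (· ^ d : K → K) := by
  classical
  have hunits : (Nat.card Kˣ).Coprime d := by
    rw [Nat.card_eq_fintype_card, Fintype.card_units]
    exact hcop.symm
  intro x y h
  simp only at h
  rcases eq_or_ne x 0 with rfl | hx
  · rw [zero_pow hd, eq_comm, pow_eq_zero_iff hd] at h
    exact h.symm
  rcases eq_or_ne y 0 with rfl | hy
  · rw [zero_pow hd, pow_eq_zero_iff hd] at h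
    exact absurd h hx
  have := hunits.pow_left_bijective.injective (a₁ := Units.mk0 x hx) (a₂ := Units.mk0 y hy)
    (Units.ext (by simpa using h))
  simpa using congr_arg Units.val this

theorem CharTwo.sum_pow_add_add_pow {F M : Type*} [Field F] [Fintype F] [CharP F 2]
    [AddCommMonoid M] (g : F → M) {d : ℕ} (hd : d ≠ 0) (v : F) :
    ∑ x, g (x ^ d + (x + v) ^ d) = ∑ s, g (v ^ d * (s ^ d + (s + 1) ^ d)) := by
  rcases eq_or_ne v 0 with rfl | hv
  · simp [zero_pow hd, CharTwo.add_self_eq_zero]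
  refine (Fintype.sum_equiv (Equiv.mulLeft₀ v hv) _ _ fun s ↦ ?_).symm
  change g (v ^ d * (s ^ d + (s + 1) ^ d)) = g ((v * s) ^ d + (v * s + v) ^ d)
  rw [← mul_add_one, mul_pow, mul_pow, mul_add]

open scoped Classical in
noncomputable def powDiffSet (F : Type*) [Field F] [Fintype F] [CharP F 2] (m d : ℕ) :
    Finset F :=
  {s | s ^ d + (s + 1) ^ d ∈ fixedSubfield F m}

section powDiffSet

variable {F : Type*} [Field F] [CharP F 2] {m d : ℕ}

theorem pow_add_add_one_pow_mem_fixedSubfield {s : F}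
    (hs : relTrace F m s = 0 ∨ relTrace F m s = 1) :
    s ^ d + (s + 1) ^ d ∈ fixedSubfield F m := by
  have hs1 : (s + 1) ^ 2 ^ m = s ^ 2 ^ m + 1 := by rw [add_pow_char_pow, one_pow]
  rw [mem_fixedSubfield, add_pow_char_pow, pow_right_comm, pow_right_comm (s + 1), hs1]
  rw [relTrace_apply] at hs
  rcases hs with hs | hs
  · rw [add_eq_zero_iff_eq_neg, CharTwo.neg_eq] at hs
    rw [hs]
  · have hsQ : s ^ 2 ^ m = s + 1 := by
      rw [← hs, add_comm _ s, CharTwo.add_cancel_left]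
    rw [hsQ, add_assoc, CharTwo.add_self_eq_zero, add_zero, add_comm]

variable [Fintype F]

open scoped Classical in
theorem card_filter_relTrace_eq (hm : 0 < m) (hcard : Fintype.card F = (2 ^ m) ^ 2) {y : F}
    (hy : y ∈ fixedSubfield F m) : #{s | relTrace F m s = y} = 2 ^ m := by
  have hy' : y ∈ Set.range (relTrace F m) := by
    rw [← AddMonoidHom.coe_range, range_relTrace hm hcard]
    exact hy
  rw [AddMonoidHom.card_fiber_eq_of_mem_range _ hy' ⟨0, map_zero _⟩]
  simp_rw [← AddMonoidHom.mem_ker, ker_relTrace, Subfield.mem_toAddSubgroup]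
  exact card_filter_mem_fixedSubfield hm hcard

theorem two_mul_two_pow_le_card_powDiffSet (hm : 0 < m)
    (hcard : Fintype.card F = (2 ^ m) ^ 2) :
    2 * 2 ^ m ≤ #(powDiffSet F m d) := by
  classical
  calc 2 * 2 ^ m = #{s | relTrace F m s = 0} + #{s | relTrace F m s = 1} := by
        rw [card_filter_relTrace_eq hm hcard (zero_mem _),
          card_filter_relTrace_eq hm hcard (one_mem _), two_mul]
    _ = #{s | relTrace F m s = 0 ∨ relTrace F m s = 1} := by
        rw [filter_or, card_union_of_disjoint
          (disjoint_filter.2 fun s _ h0 h1 ↦ zero_ne_one (h0.symm.trans h1))]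
    _ ≤ #(powDiffSet F m d) := by
        refine card_le_card fun s hs ↦ ?_
        simp only [powDiffSet, mem_filter, mem_univ, true_and] at hs ⊢
        exact pow_add_add_one_pow_mem_fixedSubfield hs

end powDiffSet

noncomputable def realWeilSum (F : Type*) [Field F] [Fintype F] [CharP F 2] (d : ℕ) (a : F) :
    ℝ :=
  ∑ x, traceChar F (x ^ d + a * x)

section realWeilSum

open scoped Classical

variable {F : Type*} [Field F] [Fintype F] [CharP F 2] {m d : ℕ}

theorem weilSum_two_eq_realWeilSum (a : F) : weilSum F 2 d a = realWeilSum F d a := by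
  simp only [weilSum, realWeilSum, canonicalPsi_two_eq_traceChar, CharTwo.sub_eq_add,
    Complex.ofReal_sum]

theorem realWeilSum_zero (hd : d ≠ 0) (hcop : d.Coprime (Fintype.card F - 1)) :
    realWeilSum F d 0 = 0 := by
  simp only [realWeilSum, zero_mul, add_zero]
  rw [(pow_injective_of_coprime hd hcop).bijective_of_finite.sum_comp (traceChar F)]
  exact AddChar.sum_eq_zero_of_ne_one traceChar_ne_one

theorem sum_fixedSubfield_realWeilSum (hm : 0 < m) (hcard : Fintype.card F = (2 ^ m) ^ 2) :
    ∑ a : fixedSubfield F m, realWeilSum F d a = (2 ^ m) ^ 2 := by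
  calc ∑ a : fixedSubfield F m, realWeilSum F d a
      = ∑ x, traceChar F (x ^ d) * ∑ a : fixedSubfield F m, traceChar F (a * x) := by
        simp only [realWeilSum, AddChar.map_add_eq_mul, mul_sum]
        exact sum_comm
    _ = ∑ x ∈ {x | x ∈ fixedSubfield F m}, 2 ^ m := by
        simp only [sum_fixedSubfield_traceChar_mul hm hcard, mul_ite, mul_zero, sum_filter]
        refine sum_congr rfl fun x _ ↦ ?_
        split_ifs with hx
        · rw [traceChar_eq_one_of_mem_fixedSubfield hm hcard (pow_mem hx d), one_mul]
        · rfl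
    _ = (2 ^ m) ^ 2 := by
        rw [sum_const, card_filter_mem_fixedSubfield hm hcard, nsmul_eq_mul, sq, Nat.cast_pow,
          Nat.cast_ofNat]

theorem sum_ite_mem_fixedSubfield {M : Type*} [AddCommMonoid M] (f : F → M) :
    ∑ x, (if x ∈ fixedSubfield F m then f x else 0) = ∑ x : fixedSubfield F m, f x := by
  rw [← sum_filter]
  exact sum_subtype _ (by simp) f

theorem sum_fixedSubfield_traceChar_pow_mul (hm : 0 < m)
    (hcard : Fintype.card F = (2 ^ m) ^ 2) (hd : d ≠ 0) (hcop : d.Coprime (Fintype.card F - 1))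
    (c : F) :
    ∑ u : fixedSubfield F m, traceChar F (u ^ d * c) =
      if c ∈ fixedSubfield F m then 2 ^ m else 0 := by
  let f : fixedSubfield F m → fixedSubfield F m := fun u ↦ u ^ d
  have hf : f.Injective := fun u v h ↦
    Subtype.ext (pow_injective_of_coprime hd hcop (congrArg Subtype.val h :))
  rw [← sum_fixedSubfield_traceChar_mul hm hcard c,
    ← hf.bijective_of_finite.sum_comp (fun u ↦ traceChar F (u * c))]
  simp [f]

theorem sum_fixedSubfield_realWeilSum_sq (hm : 0 < m) (hcard : Fintype.card F = (2 ^ m) ^ 2)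
    (hd : d ≠ 0) (hcop : d.Coprime (Fintype.card F - 1)) :
    ∑ a : fixedSubfield F m, realWeilSum F d a ^ 2 =
      (2 ^ m) ^ 2 * #(powDiffSet F m d) := by
  have hsq (a : F) : realWeilSum F d a ^ 2 =
      ∑ x, ∑ y, traceChar F (x ^ d + y ^ d) * traceChar F (a * (x + y)) := by
    simp only [realWeilSum, sq, sum_mul_sum, AddChar.map_add_eq_mul, mul_add]
    exact sum_congr rfl fun x _ ↦ sum_congr rfl fun y _ ↦ by ring
  calc ∑ a : fixedSubfield F m, realWeilSum F d a ^ 2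
      = ∑ x, ∑ y, traceChar F (x ^ d + y ^ d) *
          ∑ a : fixedSubfield F m, traceChar F (a * (x + y)) := by
        simp_rw [hsq, mul_sum]
        rw [sum_comm]
        exact sum_congr rfl fun x _ ↦ sum_comm
    _ = ∑ x, ∑ v, traceChar F (x ^ d + (x + v) ^ d) *
          ∑ a : fixedSubfield F m, traceChar F (a * v) := by
        refine sum_congr rfl fun x _ ↦ (Fintype.sum_equiv (Equiv.addLeft x) _ _ fun v ↦ ?_).symm
        simp [CharTwo.add_cancel_left]
    _ = 2 ^ m * ∑ v : fixedSubfield F m, ∑ s, traceChar F (v ^ d * (s ^ d + (s + 1) ^ d)) := by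
        rw [sum_comm, mul_sum, ← sum_ite_mem_fixedSubfield
          fun v ↦ 2 ^ m * ∑ s, traceChar F (v ^ d * (s ^ d + (s + 1) ^ d))]
        refine sum_congr rfl fun v _ ↦ ?_
        rw [← sum_mul, CharTwo.sum_pow_add_add_pow _ hd, sum_fixedSubfield_traceChar_mul hm hcard]
        split_ifs <;> ring
    _ = 2 ^ m * ∑ s, if s ^ d + (s + 1) ^ d ∈ fixedSubfield F m then 2 ^ m else 0 := by
        rw [sum_comm]
        simp_rw [sum_fixedSubfield_traceChar_pow_mul hm hcard hd hcop]
    _ = (2 ^ m) ^ 2 * #(powDiffSet F m d) := by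
        rw [powDiffSet, ← sum_filter, sum_const, nsmul_eq_mul]
        ring

end realWeilSum

theorem sq_eq_posPart_sq_add_negPart_sq (a : ℝ) : a ^ 2 = a⁺ ^ 2 + a⁻ ^ 2 := by
  rcases le_total a 0 with h | h
  · rw [posPart_eq_zero.2 h, negPart_eq_neg.2 h]; ring
  · rw [posPart_eq_self.2 h, negPart_eq_zero.2 h]; ring

theorem sum_sq_le_mul_sum_posPart_add_sq_sum_negPart {ι : Type*} (s : Finset ι) (g : ι → ℝ)
    {T : ℝ} (hg : ∀ i ∈ s, g i ≤ T) :
    ∑ i ∈ s, g i ^ 2 ≤ T * ∑ i ∈ s, (g i)⁺ + (∑ i ∈ s, (g i)⁻) ^ 2 := by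
  have hpos : ∑ i ∈ s, (g i)⁺ ^ 2 ≤ T * ∑ i ∈ s, (g i)⁺ := by
    rw [mul_sum]
    refine sum_le_sum fun i hi ↦ ?_
    rcases le_total (g i) 0 with h | h
    · simp [posPart_eq_zero.2 h]
    · rw [posPart_eq_self.2 h, sq]
      exact mul_le_mul_of_nonneg_right (hg i hi) h
  have hneg := sum_sq_le_sq_sum_of_nonneg fun i (_ : i ∈ s) ↦ negPart_nonneg (g i)
  simp_rw [sq_eq_posPart_sq_add_negPart_sq (g _), sum_add_distrib]
  linarith

theorem sum_sq_le_of_le_of_sum_eq {ι : Type*} (s : Finset ι) (g : ι → ℝ) {Q T : ℝ}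
    (hs : (#s : ℝ) = Q - 1) (hT : T ^ 2 ≤ Q) (hg : ∀ i ∈ s, g i ≤ T)
    (hsum : ∑ i ∈ s, g i = Q) :
    ∑ i ∈ s, g i ^ 2 ≤ Q ^ 3 - 2 * Q ^ 2 := by
  set P := ∑ i ∈ s, (g i)⁺
  set N := ∑ i ∈ s, (g i)⁻
  have hPN : P - N = Q := by
    rw [← sum_sub_distrib, ← hsum]
    simp_rw [posPart_sub_negPart]
  have hQT : Q ≤ (Q - 1) * T := by
    calc Q = ∑ i ∈ s, g i := hsum.symm
      _ ≤ ∑ i ∈ s, T := sum_le_sum hg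
      _ = (Q - 1) * T := by rw [sum_const, nsmul_eq_mul, hs]
  have hQ : 1 ≤ Q := by linarith [hs ▸ (Nat.cast_nonneg #s : (0 : ℝ) ≤ #s)]
  have hT0 : 0 ≤ T := by nlinarith
  have hP : P ≤ (Q - 1) * T := by
    calc P ≤ ∑ i ∈ s, T :=
          sum_le_sum fun i hi ↦ (posPart_def (g i)).trans_le (sup_le (hg i hi) hT0)
      _ = (Q - 1) * T := by rw [sum_const, nsmul_eq_mul, hs]
  have hN : 0 ≤ N := sum_nonneg fun i _ ↦ negPart_nonneg (g i)
  have hTP : T * P ≤ T * ((Q - 1) * T) := mul_le_mul_of_nonneg_left hP hT0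
  have hN2 : N ^ 2 ≤ ((Q - 1) * T - Q) ^ 2 := pow_le_pow_left₀ hN (by linarith) 2
  have hT2 : (Q - 1) * Q * T ^ 2 ≤ (Q - 1) * Q * Q := mul_le_mul_of_nonneg_left hT (by nlinarith)
  have hQ2 : Q * Q ≤ Q * ((Q - 1) * T) := mul_le_mul_of_nonneg_left hQT (by linarith)
  linarith [sum_sq_le_mul_sum_posPart_add_sq_sum_negPart s g hg]

theorem exists_lt_of_sum_eq_of_sum_sq_ge {ι : Type*} (s : Finset ι) (w : ι → ℝ) {i₀ : ι}
    (hi₀ : i₀ ∈ s) (hw₀ : w i₀ = 0) {Q T : ℝ} (hs : (#s : ℝ) = Q) (hT : T ^ 2 ≤ Q)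
    (hsum : ∑ i ∈ s, w i = Q ^ 2) (hsum_sq : 2 * Q ^ 3 ≤ ∑ i ∈ s, w i ^ 2) :
    ∃ i ∈ s, i ≠ i₀ ∧ Q + T < w i := by
  classical
  by_contra! h
  have hcard : (#(s.erase i₀) : ℝ) = Q - 1 := by
    rw [card_erase_of_mem hi₀, Nat.cast_sub (one_le_card.2 ⟨_, hi₀⟩), hs, Nat.cast_one]
  have hsum' : ∑ i ∈ s.erase i₀, (w i - Q) = Q := by
    rw [sum_sub_distrib, sum_erase_eq_sub hi₀, hsum, hw₀, sum_const, nsmul_eq_mul, hcard]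
    ring
  have hsum_sq' : ∑ i ∈ s.erase i₀, (w i - Q) ^ 2 =
      ∑ i ∈ s, w i ^ 2 - 2 * Q * ∑ i ∈ s, w i + (Q - 1) * Q ^ 2 := by
    simp_rw [sub_sq]
    rw [sum_add_distrib, sum_sub_distrib, sum_erase_eq_sub hi₀, sum_erase_eq_sub hi₀, sum_const,
      nsmul_eq_mul, hcard, ← sum_mul, ← mul_sum, hw₀]
    ring
  have := sum_sq_le_of_le_of_sum_eq (s.erase i₀) (fun i ↦ w i - Q) hcard hT
    (fun i hi ↦ by linarith [h i (mem_of_mem_erase hi) (ne_of_mem_erase hi)]) hsum'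
  have hQ : 1 ≤ Q := by rw [← hs]; exact_mod_cast one_le_card.2 ⟨_, hi₀⟩
  nlinarith

/-- Feng-Leung-Xiang: if `F` has characteristic `2` and order `2^{2m}`, then there is some
nonzero `a ∈ F` such that `W_{F,d}(a) > 2^m + 2^{⌊m/2⌋}`. -/
theorem exists_weilSum_gt (F : Type*) [Field F] [Fintype F] [CharP F 2]
    (m : ℕ) (hm : 0 < m) (hcard : Fintype.card F = 2 ^ (2 * m))
    (d : ℕ) (hd : 0 < d) (hgcd : Nat.gcd d (Fintype.card F - 1) = 1) :
    ∃ a : F, a ≠ 0 ∧ ∃ r : ℝ, weilSum F 2 d a = (r : ℂ) ∧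
      (2 : ℝ) ^ m + 2 ^ (m / 2) < r := by
  classical
  have hcard' : Fintype.card F = (2 ^ m) ^ 2 := by rw [hcard, pow_mul']
  have hK : (#(univ : Finset (fixedSubfield F m)) : ℝ) = 2 ^ m := by
    rw [card_univ, ← Nat.card_eq_fintype_card, card_fixedSubfield hm hcard']
    norm_num
  have hT : ((2 : ℝ) ^ (m / 2)) ^ 2 ≤ 2 ^ m := by
    rw [← pow_mul]
    exact pow_le_pow_right₀ one_le_two (Nat.div_mul_le_self m 2)
  have hN : (2 : ℝ) * 2 ^ m ≤ #(powDiffSet F m d) := by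
    exact_mod_cast two_mul_two_pow_le_card_powDiffSet hm hcard'
  obtain ⟨a, -, ha, hlt⟩ := exists_lt_of_sum_eq_of_sum_sq_ge univ
    (fun a : fixedSubfield F m ↦ realWeilSum F d a) (mem_univ 0) (realWeilSum_zero hd.ne' hgcd)
    hK hT (sum_fixedSubfield_realWeilSum hm hcard') (by
      rw [sum_fixedSubfield_realWeilSum_sq hm hcard' hd.ne' hgcd]
      nlinarith)
  exact ⟨a, by simpa using ha, _, weilSum_two_eq_realWeilSum (a : F), hlt⟩
end
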